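/- arXiv:1803.07194 — 3 statements merged into one kernel-verified Lean document; each statement's English description precedes it below -/
import Mathlib

section
/- Upper bound on the Morse index of T^α_{1,k} in the full space, case α < 0: Let N ≥ 3 be an integer, α < 0 and k ∈ {1,…,⌊(N−1)/2⌋}. Then the Morse index of T^α_{1,k} on L²(G) is at most k+1; that is, every linear subspace of dom(T^α_{1,k}) on which the quadratic form V ↦ ⟨T^α_{1,k}V, V⟩_{L²(G)} is negative definite has dimension at most k+1. -/
open MeasureTheory Set Filter

noncomputable section

def mu : Measure ℝ := volume.restrict (Set.Ioi (0:ℝ))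

def MemL2 (f : ℝ → ℂ) : Prop := MeasureTheory.MemLp f 2 mu

def MemH1 (f : ℝ → ℂ) : Prop :=
  ContinuousOn f (Set.Ici (0:ℝ)) ∧ (∀ x ∈ Set.Ioi (0:ℝ), DifferentiableAt ℝ f x) ∧
    MemL2 f ∧ MemL2 (deriv f)

def MemH2 (f : ℝ → ℂ) : Prop :=
  MemH1 f ∧ ContinuousOn (deriv f) (Set.Ici (0:ℝ)) ∧
    (∀ x ∈ Set.Ioi (0:ℝ), DifferentiableAt ℝ (deriv f) x) ∧ MemL2 (deriv (deriv f))

def MemW1 (f : ℝ → ℂ) : Prop := MemH1 f ∧ MemL2 (fun x => (x : ℂ) * f x)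

def MemW2 (f : ℝ → ℂ) : Prop := MemH2 f ∧ MemL2 (fun x => ((x : ℂ))^2 * f x)

def domDelta (N : ℕ) (α : ℝ) (V : Fin N → ℝ → ℂ) : Prop :=
  (∀ j, MemW2 (V j)) ∧ (∀ j j', V j 0 = V j' 0) ∧
    (∀ j₀, (∑ j, deriv (V j) 0) = (α : ℂ) * V j₀ 0)

def pot (N k : ℕ) (α c : ℝ) (j : Fin N) (x : ℝ) : ℝ :=
  if (j : ℕ) < k then (x - α/(2*(k:ℝ) - (N:ℝ)))^2 - c else (x + α/(2*(k:ℝ) - (N:ℝ)))^2 - c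

def Tlin (N k : ℕ) (α c : ℝ) (V : Fin N → ℝ → ℂ) (j : Fin N) (x : ℝ) : ℂ :=
  -(deriv (deriv (V j)) x) + (pot N k α c j x : ℂ) * V j x

def qf (N k : ℕ) (α c : ℝ) (V : Fin N → ℝ → ℂ) : ℝ :=
  (∑ j, ∫ x in Set.Ioi (0:ℝ), Tlin N k α c V j x * (starRingEnd ℂ) (V j x)).re

def memL2k (N k : ℕ) (V : Fin N → ℝ → ℂ) : Prop :=
  ∀ j j' : Fin N, (((j:ℕ) < k ∧ (j':ℕ) < k) ∨ (k ≤ (j:ℕ) ∧ k ≤ (j':ℕ))) → V j =ᵐ[mu] V j'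

def phiProf (N k : ℕ) (α ω : ℝ) (j : Fin N) (x : ℝ) : ℝ :=
  if (j : ℕ) < k then Real.exp ((ω+1)/2) * Real.exp (-(x - α/(2*(k:ℝ) - (N:ℝ)))^2/2)
  else Real.exp ((ω+1)/2) * Real.exp (-(x + α/(2*(k:ℝ) - (N:ℝ)))^2/2)

/-!
On edge `j` the operator is `-d²/dx² + (x - b)² - 3` with `b = a` for `j < k` and `b = -a`
otherwise, where `a = α / (2k - N) > 0`. The function `ψ(x) = (x - b) e^{-(x-b)²/2}` solves
`-ψ'' + ((x - b)² - 3) ψ = 0` and vanishes only at `b`, so with `φ = ψ'/ψ` the potential is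
`φ' + φ²` and the form density factors as

  `Re((-u'' + (φ' + φ²) u) ū) = (φ |u|² - Re(u' ū))' + |u' - φ u|²`

away from `b`. Integrating, the form on an edge is bounded below by boundary terms of the flux
`φ |u|² - Re(u' ū)`; these vanish at `0` when `u(0) = 0`, at `b` when `u(b) = 0`, and along a
sequence tending to `∞` because the flux is dominated by an integrable function. Hence the form
is nonnegative on the subspace `V(0) = 0`, `V_j(a) = 0` (`j < k`), of codimension at most
`k + 1`, which a negative definite subspace must meet trivially.
-/

open Complex ComplexConjugate Topology

theorem MeasureTheory.MemLp.id_mul_of_sq_mul {μ : Measure ℝ} {f : ℝ → ℂ} (hf : MemLp f 2 μ)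
    (hf2 : MemLp (fun x : ℝ => (x : ℂ) ^ 2 * f x) 2 μ) :
    MemLp (fun x : ℝ => (x : ℂ) * f x) 2 μ := by
  refine (hf.norm.add hf2.norm).of_le (continuous_ofReal.aestronglyMeasurable.mul hf.1) ?_
  filter_upwards with x
  have hx : |x| ≤ 1 + x ^ 2 := by nlinarith [abs_nonneg x, sq_abs x]
  calc ‖(x : ℂ) * f x‖ = |x| * ‖f x‖ := by simp
    _ ≤ (1 + x ^ 2) * ‖f x‖ := by gcongr
    _ = ‖‖f x‖ + ‖(x : ℂ) ^ 2 * f x‖‖ := by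
      rw [Real.norm_of_nonneg (by positivity)]
      simp [add_mul]

theorem MeasureTheory.IntegrableOn.intervalIntegrable_of_Ioi {E : Type*} [NormedAddCommGroup E]
    {f : ℝ → E} {a s t : ℝ} (hf : IntegrableOn f (Ioi a)) (hs : a ≤ s) (ht : a ≤ t) :
    IntervalIntegrable f volume s t :=
  intervalIntegrable_iff.2 (hf.mono_set fun _ hx => (le_min hs ht).trans_lt hx.1)

theorem MeasureTheory.IntegrableOn.continuousOn_primitive_Ici {E : Type*} [NormedAddCommGroup E]
    [NormedSpace ℝ E] {f : ℝ → E} {a : ℝ} (hf : IntegrableOn f (Ioi a)) :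
    ContinuousOn (fun t => ∫ x in a..t, f x) (Ici a) := by
  intro t ht
  have hint : IntervalIntegrable f volume (min a a) (max a (t + 1)) :=
    hf.intervalIntegrable_of_Ioi (le_min le_rfl le_rfl) (le_max_left _ _)
  refine (intervalIntegral.continuousWithinAt_primitive (measure_singleton t) hint)
    |>.mono_of_mem_nhdsWithin ?_
  exact mem_of_superset (inter_mem_nhdsWithin _ (Iio_mem_nhds (lt_add_one t)))
    fun y hy => ⟨hy.1, hy.2.le⟩

theorem MeasureTheory.IntegrableOn.frequently_norm_lt_atTop {E : Type*} [NormedAddCommGroup E]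
    {f : ℝ → E} {a : ℝ} (hf : IntegrableOn f (Ioi a)) {ε : ℝ} (hε : 0 < ε) :
    ∃ᶠ t in atTop, ‖f t‖ < ε := by
  intro hlarge
  obtain ⟨M, hM⟩ := eventually_atTop.1 hlarge
  have hconst : IntegrableOn (fun _ => ε) (Ioi (max a M)) :=
    (hf.mono_set (Ioi_subset_Ioi (le_max_left a M))).norm.mono' aestronglyMeasurable_const
      (ae_restrict_of_forall_mem measurableSet_Ioi fun t ht => by
        rw [Real.norm_of_nonneg hε.le]
        exact not_lt.1 (hM t ((le_max_right a M).trans ht.out.le)))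
  simp [integrableOn_const_iff, hε.ne'] at hconst

theorem le_of_monotoneOn_sub {D : Set ℝ} {lₗ lᵣ : Filter ℝ} [lₗ.NeBot] {P F : ℝ → ℝ} {A B : ℝ}
    (hmono : MonotoneOn (P - F) D) (hl : ∀ᶠ s in lₗ, s ∈ D)
    (hr : ∀ s ∈ D, ∀ᶠ t in lᵣ, s ≤ t ∧ t ∈ D)
    (hPl : Tendsto P lₗ (𝓝 A)) (hFl : Tendsto F lₗ (𝓝 0))
    (hPr : Tendsto P lᵣ (𝓝 B)) (hFr : ∀ ε > 0, ∃ᶠ t in lᵣ, -ε < F t) : A ≤ B := by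
  refine le_of_forall_pos_lt_add fun ε hε => ?_
  have hQ : Tendsto (P - F) lₗ (𝓝 (A - 0)) := hPl.sub hFl
  rw [sub_zero] at hQ
  obtain ⟨s, hsD, hs⟩ :=
    (hl.and (hQ.eventually (lt_mem_nhds (show A - ε / 2 < A by linarith)))).exists
  obtain ⟨t, hFt, ⟨hst, htD⟩, hPt⟩ := ((hFr (ε / 4) (by positivity)).and_eventually
    ((hr s hsD).and (hPr.eventually (gt_mem_nhds (show B < B + ε / 4 by linarith))))).exists
  have hQst := hmono hsD htD hst
  simp only [Pi.sub_apply] at hQst hs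
  linarith

universe u

theorem Submodule.rank_le_of_forall_eq_zero {K M : Type u} [Field K] [AddCommGroup M] [Module K M]
    {n : ℕ} (S : Submodule K M) (f : M →ₗ[K] Fin n → K) (hf : ∀ v ∈ S, f v = 0 → v = 0) :
    Module.rank K S ≤ n :=
  (LinearMap.rank_le_of_injective (f.comp S.subtype)
    ((injective_iff_map_eq_zero _).2 fun v hv => Subtype.ext (hf v v.2 hv))).trans_eq
    (rank_fin_fun n)

theorem HasDerivAt.re_mul_conj {f g : ℝ → ℂ} {f' g' : ℂ} {x : ℝ} (hf : HasDerivAt f f' x)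
    (hg : HasDerivAt g g' x) :
    HasDerivAt (fun y => (f y * conj (g y)).re) ((f' * conj (g x) + f x * conj g').re) x :=
  reCLM.hasFDerivAt.comp_hasDerivAt x (hf.mul hg.star)

theorem HasDerivAt.normSq {f : ℝ → ℂ} {f' : ℂ} {x : ℝ} (hf : HasDerivAt f f' x) :
    HasDerivAt (fun y => normSq (f y)) (2 * (f' * conj (f x)).re) x := by
  have h := hf.re_mul_conj hf
  simp only [mul_conj, ofReal_re] at h
  refine h.congr_deriv ?_
  simp only [add_re, mul_re, conj_re, conj_im]
  ring

section GroundState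

variable {φ φ' q : ℝ → ℝ} {u : ℝ → ℂ}

def energyDensity (q : ℝ → ℝ) (u : ℝ → ℂ) (x : ℝ) : ℝ :=
  ((-deriv (deriv u) x + (q x : ℂ) * u x) * conj (u x)).re

def groundStateFlux (φ : ℝ → ℝ) (u : ℝ → ℂ) (x : ℝ) : ℝ :=
  φ x * normSq (u x) - (deriv u x * conj (u x)).re

theorem groundStateFlux_eq (φ : ℝ → ℝ) (u : ℝ → ℂ) (x : ℝ) :
    groundStateFlux φ u x = (((φ x : ℂ) * u x - deriv u x) * conj (u x)).re := by
  simp only [groundStateFlux, sub_mul, sub_re, mul_assoc, mul_conj, ← ofReal_mul, ofReal_re]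

theorem energyDensity_eq_of_riccati {x : ℝ} (hq : q x = φ' x + φ x ^ 2) :
    energyDensity q u x =
      (φ' x * normSq (u x) + φ x * (2 * (deriv u x * conj (u x)).re))
        - ((deriv (deriv u) x * conj (u x)).re + normSq (deriv u x))
        + normSq (deriv u x - φ x * u x) := by
  simp only [energyDensity, hq, normSq_apply, mul_re, mul_im, add_re, add_im, neg_re, neg_im,
    sub_re, sub_im, conj_re, conj_im, ofReal_re, ofReal_im]
  ring

theorem groundStateFlux_sub_le_integral {s t : ℝ} (hst : s ≤ t)
    (hu : ∀ x ∈ Icc s t, DifferentiableAt ℝ u x)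
    (hu' : ∀ x ∈ Icc s t, DifferentiableAt ℝ (deriv u) x)
    (hφ : ∀ x ∈ Icc s t, HasDerivAt φ (φ' x) x) (hφ' : ContinuousOn φ' (Icc s t))
    (hq : ∀ x ∈ Icc s t, q x = φ' x + φ x ^ 2)
    (hint : IntervalIntegrable (fun x => (deriv (deriv u) x * conj (u x)).re) volume s t) :
    groundStateFlux φ u t - groundStateFlux φ u s ≤ ∫ x in s..t, energyDensity q u x := by
  rw [← uIcc_of_le hst] at hu hu' hφ hφ' hq
  have hcu : ContinuousOn u (uIcc s t) := fun x hx => (hu x hx).continuousAt.continuousWithinAt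
  have hcu' : ContinuousOn (deriv u) (uIcc s t) := fun x hx =>
    (hu' x hx).continuousAt.continuousWithinAt
  have hcφ : ContinuousOn φ (uIcc s t) := fun x hx => (hφ x hx).continuousAt.continuousWithinAt
  have hmass_int : IntervalIntegrable
      (fun x => φ' x * normSq (u x) + φ x * (2 * (deriv u x * conj (u x)).re)) volume s t :=
    ContinuousOn.intervalIntegrable (by fun_prop)
  have hcurrent_int : IntervalIntegrable
      (fun x => (deriv (deriv u) x * conj (u x)).re + normSq (deriv u x)) volume s t :=
    hint.add (ContinuousOn.intervalIntegrable (by fun_prop))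
  have hsq_int : IntervalIntegrable (fun x => normSq (deriv u x - φ x * u x)) volume s t :=
    ContinuousOn.intervalIntegrable (by fun_prop)
  have hmass : ∫ x in s..t, (φ' x * normSq (u x) + φ x * (2 * (deriv u x * conj (u x)).re)) =
      φ t * normSq (u t) - φ s * normSq (u s) :=
    intervalIntegral.integral_eq_sub_of_hasDerivAt (f := fun x => φ x * normSq (u x))
      (fun x hx => (hφ x hx).mul (hu x hx).hasDerivAt.normSq) hmass_int
  have hcurrent : ∫ x in s..t, ((deriv (deriv u) x * conj (u x)).re + normSq (deriv u x)) =
      (deriv u t * conj (u t)).re - (deriv u s * conj (u s)).re := by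
    refine intervalIntegral.integral_eq_sub_of_hasDerivAt
      (f := fun x => (deriv u x * conj (u x)).re) (fun x hx => ?_) hcurrent_int
    refine ((hu' x hx).hasDerivAt.re_mul_conj (hu x hx).hasDerivAt).congr_deriv ?_
    rw [add_re, mul_conj, ofReal_re]
  have hsq : 0 ≤ ∫ x in s..t, normSq (deriv u x - φ x * u x) :=
    intervalIntegral.integral_nonneg hst fun _ _ => normSq_nonneg _
  rw [intervalIntegral.integral_congr fun x hx => energyDensity_eq_of_riccati (hq x hx),
    intervalIntegral.integral_add (hmass_int.sub hcurrent_int) hsq_int,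
    intervalIntegral.integral_sub hmass_int hcurrent_int, hmass, hcurrent]
  simp only [groundStateFlux]
  linarith

theorem tendsto_groundStateFlux_zero {l : Filter ℝ} {c d : ℂ}
    (hφu : Tendsto (fun x => (φ x : ℂ) * u x) l (𝓝 c)) (hu : Tendsto u l (𝓝 0))
    (hu' : Tendsto (deriv u) l (𝓝 d)) : Tendsto (groundStateFlux φ u) l (𝓝 0) := by
  have h := (continuous_re.tendsto _).comp ((hφu.sub hu').mul ((continuous_conj.tendsto 0).comp hu))
  rw [map_zero, mul_zero, zero_re] at h
  exact h.congr fun x => (groundStateFlux_eq φ u x).symm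

end GroundState

section Hermite

variable {u : ℝ → ℂ} {b : ℝ}

/-- `ψ'/ψ` for `ψ x = (x - b) * exp (-(x - b) ^ 2 / 2)`. -/
def hermiteLogDeriv (b x : ℝ) : ℝ := (x - b)⁻¹ - (x - b)

theorem hasDerivAt_hermiteLogDeriv {x : ℝ} (hx : x ≠ b) :
    HasDerivAt (hermiteLogDeriv b) (-((x - b) ^ 2)⁻¹ - 1) x := by
  have h := (hasDerivAt_id x).sub_const b
  exact ((h.inv (sub_ne_zero.2 hx)).sub h).congr_deriv (by simp [neg_div])

theorem sq_sub_three_eq_riccati {x : ℝ} (hx : x ≠ b) :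
    (x - b) ^ 2 - 3 = -((x - b) ^ 2)⁻¹ - 1 + hermiteLogDeriv b x ^ 2 := by
  have : x - b ≠ 0 := sub_ne_zero.2 hx
  unfold hermiteLogDeriv
  field_simp
  ring

theorem abs_hermiteLogDeriv_le {t : ℝ} (ht : b + 1 ≤ t) : |hermiteLogDeriv b t| ≤ 1 + |b| + t := by
  have hinv : (t - b)⁻¹ ≤ 1 := inv_le_one_of_one_le₀ (by linarith)
  have hinv0 : 0 ≤ (t - b)⁻¹ := inv_nonneg.2 (by linarith)
  rw [hermiteLogDeriv, abs_le]
  constructor <;> linarith [neg_abs_le b]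

theorem tendsto_hermiteLogDeriv_mul (hu : HasDerivAt u (deriv u b) b) (hub : u b = 0) :
    Tendsto (fun x => (hermiteLogDeriv b x : ℂ) * u x) (𝓝[≠] b) (𝓝 (deriv u b)) := by
  have hlin : Tendsto (fun x => ((x - b : ℝ) : ℂ) * u x) (𝓝[≠] b) (𝓝 0) := by
    have h : Tendsto (fun x => ((x - b : ℝ) : ℂ) * u x) (𝓝 b) (𝓝 (((b - b : ℝ) : ℂ) * u b)) :=
      ((continuous_ofReal.comp (continuous_sub_right b)).continuousAt.mul hu.continuousAt).tendsto
    rw [hub, mul_zero] at h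
    exact h.mono_left nhdsWithin_le_nhds
  have h := (hasDerivAt_iff_tendsto_slope.1 hu).sub hlin
  rw [sub_zero] at h
  refine h.congr fun x => ?_
  simp [slope, hub, hermiteLogDeriv, sub_mul]

theorem abs_groundStateFlux_hermiteLogDeriv_le {t : ℝ} (ht : b + 1 ≤ t) :
    |groundStateFlux (hermiteLogDeriv b) u t| ≤
      (‖((1 + |b| + t : ℝ) : ℂ) * u t‖ + ‖deriv u t‖) * ‖u t‖ := by
  have hφ : ‖(hermiteLogDeriv b t : ℂ) * u t‖ ≤ ‖((1 + |b| + t : ℝ) : ℂ) * u t‖ := by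
    simp only [norm_mul, norm_real, Real.norm_eq_abs]
    exact mul_le_mul_of_nonneg_right ((abs_hermiteLogDeriv_le ht).trans (le_abs_self _))
      (norm_nonneg _)
  calc |groundStateFlux (hermiteLogDeriv b) u t|
      ≤ ‖((hermiteLogDeriv b t : ℂ) * u t - deriv u t) * conj (u t)‖ := by
        rw [groundStateFlux_eq]; exact abs_re_le_norm _
    _ ≤ (‖(hermiteLogDeriv b t : ℂ) * u t‖ + ‖deriv u t‖) * ‖u t‖ := by
        rw [norm_mul, RCLike.norm_conj]; gcongr; exact norm_sub_le _ _
    _ ≤ _ := by gcongr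

end Hermite

namespace MemW2

variable {u : ℝ → ℂ} {b : ℝ}

theorem memL2_quadratic_mul (hu : MemW2 u) (c₀ c₁ c₂ : ℂ) :
    MemL2 (fun x : ℝ => (c₀ + c₁ * x + c₂ * x ^ 2) * u x) := by
  obtain ⟨⟨⟨-, -, hl2, -⟩, -⟩, hx2⟩ := hu
  unfold MemL2 at *
  convert ((hl2.const_mul c₀).add ((hl2.id_mul_of_sq_mul hx2).const_mul c₁)).add
    (hx2.const_mul c₂) using 1
  ext x
  simp only [Pi.add_apply]
  ring

theorem integrableOn_hermiteForm (hu : MemW2 u) (b : ℝ) :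
    IntegrableOn (fun x => (-deriv (deriv u) x + (((x - b) ^ 2 - 3 : ℝ) : ℂ) * u x) * conj (u x))
      (Ioi 0) := by
  have hq : MemL2 (fun x : ℝ => (((x - b) ^ 2 - 3 : ℝ) : ℂ) * u x) := by
    convert hu.memL2_quadratic_mul (b ^ 2 - 3) (-2 * b) 1 using 3 with x
    push_cast
    ring
  obtain ⟨⟨⟨-, -, hl2, -⟩, -, -, hddl2⟩, -⟩ := hu
  exact (hddl2.neg.add hq).integrable_mul hl2.star

theorem frequently_neg_lt_groundStateFlux (hu : MemW2 u) (b : ℝ) {ε : ℝ} (hε : 0 < ε) :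
    ∃ᶠ t in atTop, -ε < groundStateFlux (hermiteLogDeriv b) u t := by
  have hlin : MemL2 (fun t : ℝ => ((1 + |b| + t : ℝ) : ℂ) * u t) := by
    convert hu.memL2_quadratic_mul (1 + |b|) 1 0 using 3 with t
    push_cast
    ring
  obtain ⟨⟨⟨-, -, hl2, hdl2⟩, -⟩, -⟩ := hu
  have hbound : IntegrableOn (fun t => (‖((1 + |b| + t : ℝ) : ℂ) * u t‖ + ‖deriv u t‖) * ‖u t‖)
      (Ioi 0) := (hlin.norm.add hdl2.norm).integrable_mul hl2.norm
  refine ((hbound.frequently_norm_lt_atTop hε).and_eventually (eventually_ge_atTop (b + 1))).mono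
    fun t ⟨hsmall, ht⟩ => ?_
  have h := abs_groundStateFlux_hermiteLogDeriv_le (u := u) ht
  rw [Real.norm_eq_abs] at hsmall
  linarith [neg_abs_le (groundStateFlux (hermiteLogDeriv b) u t), le_abs_self
    ((‖((1 + |b| + t : ℝ) : ℂ) * u t‖ + ‖deriv u t‖) * ‖u t‖)]

theorem tendsto_groundStateFlux_nhdsGT_zero (hu : MemW2 u) (hb : b ≠ 0) (h0 : u 0 = 0) :
    Tendsto (groundStateFlux (hermiteLogDeriv b) u) (𝓝[>] 0) (𝓝 0) := by
  obtain ⟨⟨⟨hc, -⟩, hc', -⟩, -⟩ := hu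
  have hu0 : Tendsto u (𝓝[>] 0) (𝓝 0) :=
    h0 ▸ (hc 0 self_mem_Ici).tendsto.mono_left (nhdsWithin_mono _ Ioi_subset_Ici_self)
  have hφ : ContinuousAt (hermiteLogDeriv b) 0 :=
    ((continuous_sub_right b).continuousAt.inv₀ (by simpa using hb)).sub
      (continuous_sub_right b).continuousAt
  exact tendsto_groundStateFlux_zero
    (((continuous_ofReal.continuousAt.comp hφ).tendsto.mono_left nhdsWithin_le_nhds).mul hu0) hu0
    ((hc' 0 self_mem_Ici).tendsto.mono_left (nhdsWithin_mono _ Ioi_subset_Ici_self))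

theorem tendsto_groundStateFlux_nhdsNE (hu : MemW2 u) (hb : 0 < b) (hub : u b = 0) :
    Tendsto (groundStateFlux (hermiteLogDeriv b) u) (𝓝[≠] b) (𝓝 0) := by
  obtain ⟨⟨⟨-, hd, -, -⟩, hc', -⟩, -⟩ := hu
  have hdb := (hd b hb).hasDerivAt
  exact tendsto_groundStateFlux_zero (tendsto_hermiteLogDeriv_mul hdb hub)
    (hub ▸ hdb.continuousAt.tendsto.mono_left nhdsWithin_le_nhds)
    (((hc' b hb.le).continuousAt (Ici_mem_nhds hb)).tendsto.mono_left nhdsWithin_le_nhds)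

theorem integrableOn_energyDensity (hu : MemW2 u) (b : ℝ) :
    IntegrableOn (energyDensity (fun x => (x - b) ^ 2 - 3) u) (Ioi 0) :=
  (hu.integrableOn_hermiteForm b).re

theorem monotoneOn_primitive_sub_groundStateFlux (hu : MemW2 u) {D : Set ℝ} (hD : D ⊆ Ioi 0)
    (hDc : D.OrdConnected) (hbD : b ∉ D) :
    MonotoneOn ((fun t => ∫ x in 0..t, energyDensity (fun x => (x - b) ^ 2 - 3) u x) -
      groundStateFlux (hermiteLogDeriv b) u) D := by
  have hg := hu.integrableOn_energyDensity b
  obtain ⟨⟨⟨-, hd, hl2, -⟩, -, hdd, hddl2⟩, -⟩ := hu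
  have hint : IntegrableOn (fun x => (deriv (deriv u) x * conj (u x)).re) (Ioi 0) :=
    (hddl2.integrable_mul hl2.star).re
  intro s hs t ht hst
  have hsub : Icc s t ⊆ D := hDc.out hs ht
  have hpos : ∀ x ∈ Icc s t, 0 < x := fun x hx => hD (hsub hx)
  have hne : ∀ x ∈ Icc s t, x ≠ b := fun x hx h => hbD (h ▸ hsub hx)
  have hflux := groundStateFlux_sub_le_integral hst (fun x hx => hd x (hpos x hx))
    (fun x hx => hdd x (hpos x hx)) (fun x hx => hasDerivAt_hermiteLogDeriv (hne x hx))
    ((((continuous_sub_right b).pow 2).continuousOn.inv₀ fun x hx =>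
      pow_ne_zero 2 (sub_ne_zero.2 (hne x hx))).neg.sub continuousOn_const)
    (fun x hx => sq_sub_three_eq_riccati (hne x hx))
    (hint.intervalIntegrable_of_Ioi (hpos s ⟨le_rfl, hst⟩).le
      (hpos t ⟨hst, le_rfl⟩).le)
  rw [← intervalIntegral.integral_interval_sub_left (hg.intervalIntegrable_of_Ioi le_rfl (hD ht).le)
    (hg.intervalIntegrable_of_Ioi le_rfl (hD hs).le)] at hflux
  simp only [Pi.sub_apply]
  linarith

theorem primitive_le_setIntegral_Ioi (hu : MemW2 u) {c : ℝ} (hc : 0 ≤ c) (hbc : b ≤ c)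
    (hFc : Tendsto (groundStateFlux (hermiteLogDeriv b) u) (𝓝[>] c) (𝓝 0)) :
    ∫ x in 0..c, energyDensity (fun x => (x - b) ^ 2 - 3) u x ≤
      ∫ x in Ioi 0, energyDensity (fun x => (x - b) ^ 2 - 3) u x := by
  have hg := hu.integrableOn_energyDensity b
  exact le_of_monotoneOn_sub (lₗ := 𝓝[>] c)
    (hu.monotoneOn_primitive_sub_groundStateFlux (fun x hx => hc.trans_lt hx) ordConnected_Ioi
      (not_lt.2 hbc))
    self_mem_nhdsWithin
    (fun s hs => (eventually_ge_atTop s).mono fun t ht => ⟨ht, lt_of_lt_of_le hs ht⟩)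
    ((hg.continuousOn_primitive_Ici c hc).tendsto.mono_left
      (nhdsWithin_mono _ fun x hx => hc.trans hx.out.le))
    hFc (intervalIntegral_tendsto_integral_Ioi 0 hg tendsto_id)
    fun ε => hu.frequently_neg_lt_groundStateFlux b

theorem primitive_nonneg (hu : MemW2 u) (hb : 0 < b)
    (hF0 : Tendsto (groundStateFlux (hermiteLogDeriv b) u) (𝓝[>] 0) (𝓝 0))
    (hFb : Tendsto (groundStateFlux (hermiteLogDeriv b) u) (𝓝[<] b) (𝓝 0)) :
    0 ≤ ∫ x in 0..b, energyDensity (fun x => (x - b) ^ 2 - 3) u x := by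
  have hP := (hu.integrableOn_energyDensity b).continuousOn_primitive_Ici
  have h := le_of_monotoneOn_sub (lₗ := 𝓝[>] 0)
    (hu.monotoneOn_primitive_sub_groundStateFlux Ioo_subset_Ioi_self ordConnected_Ioo
      fun h => lt_irrefl b h.2)
    (Ioo_mem_nhdsGT hb)
    (fun s hs => mem_of_superset (Ioo_mem_nhdsLT hs.2) fun t ht => ⟨ht.1.le, hs.1.trans ht.1, ht.2⟩)
    ((hP 0 self_mem_Ici).tendsto.mono_left (nhdsWithin_mono _ Ioi_subset_Ici_self)) hF0
    (((hP b hb.le).continuousAt (Ici_mem_nhds hb)).tendsto.mono_left nhdsWithin_le_nhds)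
    fun ε hε => (hFb.eventually (lt_mem_nhds (neg_lt_zero.2 hε))).frequently
  simpa using h

theorem re_integral_hermiteForm_nonneg (hu : MemW2 u) (hb : b ≠ 0) (h0 : u 0 = 0)
    (hub : 0 < b → u b = 0) :
    0 ≤ (∫ x in Ioi 0,
      (-deriv (deriv u) x + (((x - b) ^ 2 - 3 : ℝ) : ℂ) * u x) * conj (u x)).re := by
  refine le_of_le_of_eq ?_ (integral_re (hu.integrableOn_hermiteForm b))
  have hF0 := hu.tendsto_groundStateFlux_nhdsGT_zero hb h0
  rcases hb.lt_or_gt with hb | hb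
  · exact intervalIntegral.integral_same.symm.trans_le
      (hu.primitive_le_setIntegral_Ioi le_rfl hb.le hF0)
  · have hFb := hu.tendsto_groundStateFlux_nhdsNE hb (hub hb)
    exact (hu.primitive_nonneg hb hF0 (hFb.mono_left (nhdsLT_le_nhdsNE b))).trans
      (hu.primitive_le_setIntegral_Ioi hb.le le_rfl (hFb.mono_left (nhdsGT_le_nhdsNE b)))

end MemW2

theorem pot_eq (N k : ℕ) (α c : ℝ) (j : Fin N) (x : ℝ) :
    pot N k α c j x =
      (x - if (j : ℕ) < k then α / (2 * k - N) else -(α / (2 * k - N))) ^ 2 - c := by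
  unfold pot
  split_ifs <;> ring

theorem qf_nonneg {N k : ℕ} {α : ℝ} (ha : 0 < α / (2 * k - N)) {V : Fin N → ℝ → ℂ}
    (hV : ∀ j, MemW2 (V j)) (hvertex : ∀ j, V j 0 = 0)
    (hedge : ∀ j : Fin N, (j : ℕ) < k → V j (α / (2 * k - N)) = 0) : 0 ≤ qf N k α 3 V := by
  rw [qf, re_sum]
  refine Finset.sum_nonneg fun j _ => ?_
  simp only [Tlin, pot_eq]
  split_ifs with hj
  · exact (hV j).re_integral_hermiteForm_nonneg ha.ne' (hvertex j) fun _ => hedge j hj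
  · exact (hV j).re_integral_hermiteForm_nonneg (neg_ne_zero.2 ha.ne') (hvertex j)
      fun h => absurd h (neg_neg_of_pos ha).not_gt

theorem morse_index_T1_upper_alpha_neg_general
    (N k : ℕ) (α : ℝ) (hα : α < 0) (hk1 : 1 ≤ k) (hk2 : k ≤ (N - 1) / 2) :
    ∀ S : Submodule ℂ (Fin N → ℝ → ℂ),
      (∀ V ∈ S, domDelta N α V) →
      (∀ V ∈ S, V ≠ 0 → qf N k α 3 V < 0) →
      Module.rank ℂ S ≤ ((k + 1 : ℕ) : Cardinal) := by
  intro S hdom hneg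
  have hkN : 2 * k + 1 ≤ N := by omega
  have ha : 0 < α / (2 * k - N) :=
    div_pos_of_neg_of_neg hα (by linarith [show (2 * k + 1 : ℝ) ≤ N by exact_mod_cast hkN])
  let edge : Fin (k + 1) → Fin N := Fin.castLE (by omega)
  let point : Fin (k + 1) → ℝ := fun i => if (i : ℕ) < k then α / (2 * k - N) else 0
  refine S.rank_le_of_forall_eq_zero
    (LinearMap.pi fun i => (LinearMap.proj (R := ℂ) (φ := fun _ => ℂ) (point i)).comp
      (LinearMap.proj (φ := fun _ => ℝ → ℂ) (edge i)))
    fun V hV hzero => ?_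
  have heval : ∀ i, V (edge i) (point i) = 0 := fun i => congrFun hzero i
  have hvertex : ∀ j, V j 0 = 0 := fun j =>
    ((hdom V hV).2.1 j (edge (Fin.last k))).trans (by simpa [point] using heval (Fin.last k))
  have hedge : ∀ j : Fin N, (j : ℕ) < k → V j (α / (2 * k - N)) = 0 := fun j hj => by
    simpa [edge, point, hj, Fin.castLE] using heval ⟨j, by omega⟩
  by_contra hne
  exact (hneg V hV hne).not_ge (qf_nonneg ha (fun j => (hdom V hV).1 j) hvertex hedge)

/-- upper bound on the Morse index of `T^α_{1,k}` in the full space `L²(𝒢)`. -/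
theorem morse_index_T1_upper_alpha_neg
    (N k : ℕ) (hN : 3 ≤ N) (α : ℝ) (hα : α < 0) (hk1 : 1 ≤ k) (hk2 : k ≤ (N - 1) / 2) :
    ∀ S : Submodule ℂ (Fin N → ℝ → ℂ),
      (∀ V ∈ S, domDelta N α V) →
      (∀ V ∈ S, V ≠ 0 → qf N k α 3 V < 0) →
      Module.rank ℂ S ≤ ((k + 1 : ℕ) : Cardinal) :=
  morse_index_T1_upper_alpha_neg_general N k α hα hk1 hk2
end
end

section
/- Uniqueness of L² solutions of the shifted Hermite equation with eigenvalue 1: Let a ∈ ℝ and let v : (0,∞) → ℂ be twice continuously differentiable with v ∈ L²(0,∞) and −v''(x) + ((x−a)² − 1)v(x) = 0 for all x > 0. Then there is a constant c ∈ ℂ such that v(x) = c e^{−(x−a)²/2} for all x > 0. -/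
open MeasureTheory Set Filter

noncomputable section

/-!
The operator `-d²/dx² + (x - a)² - 1` factors as `-(d/dx - (x - a)) ∘ (d/dx + (x - a))`. So for a
solution `v`, the function `q = v' + (x - a) v` solves `q' = (x - a) q`, i.e. `q = K e^{(x-a)²/2}`,
and then `(e^{(x-a)²/2} v)' = e^{(x-a)²/2} q = K e^{(x-a)²}`. If `K = 0`, `e^{(x-a)²/2} v` is
constant. Otherwise `e^{(x-a)²/2} v(x) - e^{(a-1)²/2} v(1) = K ∫₁ˣ e^{(t-a)²} dt`, and
`∫₁ˣ e^{(t-a)²} dt ≥ e^{(x-1-a)²}` forces `|v(x)| → ∞`, which is impossible in `L²(0, ∞)`.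
-/

open scoped ENNReal

theorem hasDerivAt_sub_sq_div_two (a x : ℝ) :
    HasDerivAt (fun y => (y - a) ^ 2 / 2) (x - a) x :=
  ((((hasDerivAt_id x).sub_const a).pow 2).div_const 2).congr_deriv (by simp)

theorem exists_eq_mul_exp_of_hasDerivAt {s : Set ℝ} (hs : IsOpen s) (hs' : IsPreconnected s)
    {f : ℝ → ℂ} {φ φ' : ℝ → ℝ} (hφ : ∀ x ∈ s, HasDerivAt φ (φ' x) x)
    (hf : ∀ x ∈ s, HasDerivAt f (φ' x * f x) x) :
    ∃ K : ℂ, ∀ x ∈ s, f x = K * Real.exp (φ x) := by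
  have hderiv : ∀ x ∈ s, HasDerivAt (fun y => f y * Real.exp (-φ y)) 0 x := fun x hx =>
    ((hf x hx).mul (hφ x hx).neg.exp.ofReal_comp).congr_deriv (by push_cast; ring)
  obtain ⟨K, hK⟩ := hs.exists_is_const_of_deriv_eq_zero hs'
    (fun x hx => (hderiv x hx).differentiableAt.differentiableWithinAt)
    (fun x hx => (hderiv x hx).deriv)
  refine ⟨K, fun x hx => ?_⟩
  rw [← hK x hx, mul_assoc, ← Complex.ofReal_mul, ← Real.exp_add, neg_add_cancel, Real.exp_zero,
    Complex.ofReal_one, mul_one]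

theorem hasDerivAt_deriv_add_mul_of_hermite {a x : ℝ} {v : ℝ → ℂ}
    (hv : DifferentiableAt ℝ v x) (hv' : DifferentiableAt ℝ (deriv v) x)
    (heq : -(deriv (deriv v) x) + (((x - a) ^ 2 - 1 : ℝ) : ℂ) * v x = 0) :
    HasDerivAt (fun y => deriv v y + (y - a : ℝ) * v y)
      ((x - a : ℝ) * (deriv v x + (x - a : ℝ) * v x)) x :=
  (hv'.hasDerivAt.add (((hasDerivAt_id x).sub_const a).ofReal_comp.mul hv.hasDerivAt)).congr_deriv
    (by push_cast [id] at heq ⊢; linear_combination -heq)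

theorem hasDerivAt_exp_mul_of_deriv_add_mul_eq {a x : ℝ} {K : ℂ} {v : ℝ → ℂ}
    (hv : DifferentiableAt ℝ v x)
    (hq : deriv v x + (x - a : ℝ) * v x = K * Real.exp ((x - a) ^ 2 / 2)) :
    HasDerivAt (fun y => (Real.exp ((y - a) ^ 2 / 2) : ℂ) * v y) (K * Real.exp ((x - a) ^ 2)) x :=
  ((hasDerivAt_sub_sq_div_two a x).exp.ofReal_comp.mul hv.hasDerivAt).congr_deriv (by
    have hsq : Real.exp ((x - a) ^ 2)
        = Real.exp ((x - a) ^ 2 / 2) * Real.exp ((x - a) ^ 2 / 2) := by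
      rw [← Real.exp_add, add_halves]
    rw [hsq]
    simp only [Complex.ofReal_mul, Complex.ofReal_sub] at hq ⊢
    linear_combination (Real.exp ((x - a) ^ 2 / 2) : ℂ) * hq)

theorem exp_sq_le_integral_exp_sq {a b x : ℝ} (hb : b ≤ x - 1) (ha : a ≤ x - 1) :
    Real.exp ((x - 1 - a) ^ 2) ≤ ∫ t in b..x, Real.exp ((t - a) ^ 2) := by
  have hint : ∀ c d : ℝ, IntervalIntegrable (fun t => Real.exp ((t - a) ^ 2)) volume c d :=
    fun c d => (by fun_prop : Continuous fun t : ℝ => Real.exp ((t - a) ^ 2)).intervalIntegrable c d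
  rw [← intervalIntegral.integral_add_adjacent_intervals (hint b (x - 1)) (hint (x - 1) x)]
  have hleft : 0 ≤ ∫ t in b..x - 1, Real.exp ((t - a) ^ 2) :=
    intervalIntegral.integral_nonneg hb fun t _ => (Real.exp_pos _).le
  have hright : Real.exp ((x - 1 - a) ^ 2) ≤ ∫ t in x - 1..x, Real.exp ((t - a) ^ 2) :=
    calc Real.exp ((x - 1 - a) ^ 2) = ∫ _ in x - 1..x, Real.exp ((x - 1 - a) ^ 2) := by simp
      _ ≤ _ := intervalIntegral.integral_mono_on (by linarith) intervalIntegrable_const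
          (hint _ _) fun t ht => by
            gcongr
            exact ht.1
  linarith

theorem tendsto_exp_mul_integral_exp_sq (a b : ℝ) :
    Tendsto (fun x => Real.exp (-(x - a) ^ 2 / 2) * ∫ t in b..x, Real.exp ((t - a) ^ 2))
      atTop atTop := by
  have hlin : Tendsto (fun x : ℝ => x - a - 2) atTop atTop :=
    (tendsto_atTop_add_const_right _ (-(a + 2)) tendsto_id).congr fun x => by simp only [id]; ring
  have hlow : Tendsto (fun x => Real.exp ((x - a - 2) ^ 2 / 2 - 1)) atTop atTop :=
    Real.tendsto_exp_atTop.comp <| tendsto_atTop_add_const_right _ (-1) <|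
      ((tendsto_pow_atTop two_ne_zero).comp hlin).atTop_div_const two_pos
  refine tendsto_atTop_mono' _ ?_ hlow
  filter_upwards [eventually_ge_atTop (b + 1), eventually_ge_atTop (a + 1)] with x hb ha
  calc Real.exp ((x - a - 2) ^ 2 / 2 - 1)
      = Real.exp (-(x - a) ^ 2 / 2) * Real.exp ((x - 1 - a) ^ 2) := by
        rw [← Real.exp_add]; ring_nf
    _ ≤ _ := by gcongr; exact exp_sq_le_integral_exp_sq (by linarith) (by linarith)

theorem tendsto_norm_exp_mul_of_hasDerivAt {a b : ℝ} {K : ℂ} (hK : K ≠ 0) {w : ℝ → ℂ}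
    (hw : ∀ x, b ≤ x → HasDerivAt w (K * Real.exp ((x - a) ^ 2)) x) :
    Tendsto (fun x => ‖(Real.exp (-(x - a) ^ 2 / 2) : ℂ) * w x‖) atTop atTop := by
  have hftc : ∀ x, b ≤ x → w x - w b = K * ∫ t in b..x, Real.exp ((t - a) ^ 2) := by
    intro x hx
    rw [← intervalIntegral.integral_ofReal, ← intervalIntegral.integral_const_mul]
    exact (intervalIntegral.integral_eq_sub_of_hasDerivAt
      (fun t ht => hw t (by rw [uIcc_of_le hx] at ht; exact ht.1))
      ((by fun_prop : Continuous fun t : ℝ => K * Real.exp ((t - a) ^ 2)).intervalIntegrable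
        b x)).symm
  refine tendsto_atTop_mono' _ ?_ <| tendsto_atTop_add_const_right _ (-‖w b‖) <|
    (tendsto_exp_mul_integral_exp_sq a b).const_mul_atTop (norm_pos_iff.2 hK)
  filter_upwards [eventually_ge_atTop b] with x hx
  have hg : Real.exp (-(x - a) ^ 2 / 2) ≤ 1 := Real.exp_le_one_iff.2 (by nlinarith)
  have hI : 0 ≤ ∫ t in b..x, Real.exp ((t - a) ^ 2) :=
    intervalIntegral.integral_nonneg hx fun t _ => (Real.exp_pos _).le
  have hKI : ‖K‖ * (∫ t in b..x, Real.exp ((t - a) ^ 2)) ≤ ‖w x‖ + ‖w b‖ := by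
    have := norm_sub_le (w x) (w b)
    rwa [hftc x hx, norm_mul, Complex.norm_real, Real.norm_of_nonneg hI] at this
  rw [norm_mul, Complex.norm_real, Real.norm_of_nonneg (Real.exp_pos _).le]
  nlinarith [Real.exp_pos (-(x - a) ^ 2 / 2), norm_nonneg (w b)]

theorem not_memLp_of_tendsto_norm_atTop {μ : Measure ℝ} (hμ : ∀ M, μ (Ioi M) = ∞)
    {E : Type*} [NormedAddCommGroup E] {f : ℝ → E} {p : ℝ≥0∞} (hp0 : p ≠ 0) (hp : p ≠ ∞)
    (hf : Tendsto (fun x => ‖f x‖) atTop atTop) : ¬ MemLp f p μ := by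
  intro hfp
  obtain ⟨M, hM⟩ := (hf.eventually_ge_atTop 1).exists_forall_of_atTop
  have hsub : Ioi M ⊆ {x | (1 : NNReal) ≤ ‖f x‖₊} := fun x hx => by
    simpa [← NNReal.coe_le_coe] using hM x hx.le
  have := (measure_mono (μ := μ) hsub).trans_lt (hfp.meas_ge_lt_top hp0 hp one_ne_zero)
  simp [hμ M] at this

theorem mu_Ioi (M : ℝ) : mu (Ioi M) = ∞ := by
  rw [mu, Measure.restrict_apply measurableSet_Ioi, Ioi_inter_Ioi, Real.volume_Ioi]

theorem hermite_halfline_eigenvalue_one_general (a : ℝ) (v : ℝ → ℂ)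
    (h1 : ∀ x ∈ Set.Ioi (0:ℝ), DifferentiableAt ℝ v x)
    (h2 : ∀ x ∈ Set.Ioi (0:ℝ), DifferentiableAt ℝ (deriv v) x)
    (hL2 : MeasureTheory.MemLp v 2 mu)
    (heq : ∀ x ∈ Set.Ioi (0:ℝ),
      -(deriv (deriv v) x) + (((x - a)^2 - 1 : ℝ) : ℂ) * v x = 0) :
    ∃ c : ℂ, ∀ x ∈ Set.Ioi (0:ℝ), v x = c * ((Real.exp (-(x - a)^2/2) : ℝ) : ℂ) := by
  obtain ⟨K, hK⟩ := exists_eq_mul_exp_of_hasDerivAt isOpen_Ioi isPreconnected_Ioi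
    (fun x _ => hasDerivAt_sub_sq_div_two a x)
    (fun x hx => hasDerivAt_deriv_add_mul_of_hermite (h1 x hx) (h2 x hx) (heq x hx))
  set w : ℝ → ℂ := fun x => Real.exp ((x - a) ^ 2 / 2) * v x
  have hw : ∀ x ∈ Ioi (0 : ℝ), HasDerivAt w (K * Real.exp ((x - a) ^ 2)) x := fun x hx =>
    hasDerivAt_exp_mul_of_deriv_add_mul_eq (h1 x hx) (hK x hx)
  have hv : ∀ x, v x = Real.exp (-(x - a) ^ 2 / 2) * w x := fun x => by
    rw [← mul_assoc, ← Complex.ofReal_mul, ← Real.exp_add, neg_div, neg_add_cancel, Real.exp_zero,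
      Complex.ofReal_one, one_mul]
  rcases eq_or_ne K 0 with rfl | hK0
  · obtain ⟨c, hc⟩ := isOpen_Ioi.exists_is_const_of_deriv_eq_zero isPreconnected_Ioi
      (fun x hx => (hw x hx).differentiableAt.differentiableWithinAt)
      (fun x hx => by simpa using (hw x hx).deriv)
    exact ⟨c, fun x hx => by rw [hv x, hc x hx, mul_comm]⟩
  · refine absurd hL2 (not_memLp_of_tendsto_norm_atTop mu_Ioi two_ne_zero ENNReal.ofNat_ne_top ?_)
    simpa only [← hv] using tendsto_norm_exp_mul_of_hasDerivAt hK0 (b := 1) fun x hx =>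
      hw x (zero_lt_one.trans_le hx)

/-- every `L²(0,∞)`, twice continuously differentiable solution of the shifted
Hermite equation `-v'' + ((x-a)² - 1) v = 0` on `(0,∞)` is a scalar multiple of the explicit
Gaussian-type solution. -/
theorem hermite_halfline_eigenvalue_one (a : ℝ) (v : ℝ → ℂ)
    (h1 : ∀ x ∈ Set.Ioi (0:ℝ), DifferentiableAt ℝ v x)
    (h2 : ∀ x ∈ Set.Ioi (0:ℝ), DifferentiableAt ℝ (deriv v) x)
    (h3 : ContinuousOn (deriv (deriv v)) (Set.Ioi (0:ℝ)))
    (hL2 : MeasureTheory.MemLp v 2 mu)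
    (heq : ∀ x ∈ Set.Ioi (0:ℝ),
      -(deriv (deriv v) x) + (((x - a)^2 - 1 : ℝ) : ℂ) * v x = 0) :
    ∃ c : ℂ, ∀ x ∈ Set.Ioi (0:ℝ), v x = c * ((Real.exp (-(x - a)^2/2) : ℝ) : ℂ) :=
  hermite_halfline_eigenvalue_one_general a v h1 h2 hL2 heq
end
end

section
/- The profiles Φ_k^α are standing-wave profiles: Let N ≥ 3 be an integer, α ≠ 0, ω ∈ ℝ and k ∈ {1,…,⌊(N−1)/2⌋}; set a_k = α/(2k−N). Then each component of Φ_k^α satisfies the stationary logarithmic equation −(φ^α_{k,j})''(x) + ω φ^α_{k,j}(x) − φ^α_{k,j}(x) log( (φ^α_{k,j}(x))² ) = 0 for all x > 0, and Φ_k^α satisfies the δ-vertex conditions: φ^α_{k,1}(0) = … = φ^α_{k,N}(0) and ∑_{j=1}^N (φ^α_{k,j})'(0) = α φ^α_{k,1}(0). Consequently Φ_k^α ∈ dom(H^α_δ) and H^α_δΦ_k^α + ωΦ_k^α − Φ_k^α log|Φ_k^α|² = 0, so that U(t,x) = e^{iωt}Φ_k^α(x) is a standing-wave solution of the NLS-log-δ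 equation. -/
/-!
Every component of `Φ_k^α` is a Gaussian `u = exp (c - (x + b)² / 2)` with `c = (ω + 1) / 2` and
`b = ∓a_k`. For it `u'' = ((x + b)² - 1) u` and `log u² = 2c - (x + b)²`, so
`-u'' + ω u - u log u² = (ω + 1 - 2c) u = 0`. At the vertex every component equals
`exp (c - a_k² / 2)` and has derivative `±a_k` times that value, with `k` edges of one sign and
`N - k` of the other; the derivatives add up to `(2k - N) a_k = α`. Polynomials times a Gaussian
are square integrable, which gives the `H²` and weight conditions of `dom(H^α_δ)`.
-/

open MeasureTheory Set Filter

noncomputable section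

open Real
open scoped Finset

def gaussBump (c b x : ℝ) : ℝ := exp (c - (x + b) ^ 2 / 2)

section GaussBump

variable (c b : ℝ)

theorem hasDerivAt_gaussBump (x : ℝ) :
    HasDerivAt (gaussBump c b) (-(x + b) * gaussBump c b x) x := by
  have h : HasDerivAt (fun y => c - (y + b) ^ 2 / 2) (-(x + b)) x := by
    refine (((hasDerivAt_id x).add_const b).pow 2 |>.div_const 2).const_sub c |>.congr_deriv ?_
    simp only [id_eq]
    ring
  rw [mul_comm]
  exact h.exp

theorem differentiable_gaussBump : Differentiable ℝ (gaussBump c b) :=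
  fun x => (hasDerivAt_gaussBump c b x).differentiableAt

theorem deriv_gaussBump : deriv (gaussBump c b) = fun x => -(x + b) * gaussBump c b x :=
  funext fun x => (hasDerivAt_gaussBump c b x).deriv

theorem hasDerivAt_deriv_gaussBump (x : ℝ) :
    HasDerivAt (deriv (gaussBump c b)) (((x + b) ^ 2 - 1) * gaussBump c b x) x := by
  rw [deriv_gaussBump]
  refine ((hasDerivAt_id x).add_const b).neg.mul (hasDerivAt_gaussBump c b x) |>.congr_deriv ?_
  simp only [Pi.neg_apply, id_eq]
  ring

theorem differentiable_deriv_gaussBump : Differentiable ℝ (deriv (gaussBump c b)) :=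
  fun x => (hasDerivAt_deriv_gaussBump c b x).differentiableAt

theorem deriv_deriv_gaussBump :
    deriv (deriv (gaussBump c b)) = fun x => ((x + b) ^ 2 - 1) * gaussBump c b x :=
  funext fun x => (hasDerivAt_deriv_gaussBump c b x).deriv

theorem log_sq_gaussBump (x : ℝ) : log (gaussBump c b x ^ 2) = 2 * c - (x + b) ^ 2 := by
  rw [gaussBump, ← exp_nat_mul, log_exp]
  push_cast
  ring

theorem gaussBump_zero : gaussBump c b 0 = exp (c - b ^ 2 / 2) := by
  rw [gaussBump, zero_add]

theorem gaussBump_solves_stationary_eq (ω x : ℝ) :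
    -deriv (deriv (gaussBump ((ω + 1) / 2) b)) x + ω * gaussBump ((ω + 1) / 2) b x
      - gaussBump ((ω + 1) / 2) b x * log (gaussBump ((ω + 1) / 2) b x ^ 2) = 0 := by
  rw [deriv_deriv_gaussBump, log_sq_gaussBump]
  ring

end GaussBump

theorem deriv_ofReal_comp {f : ℝ → ℝ} (hf : Differentiable ℝ f) :
    deriv (fun x => (f x : ℂ)) = fun x => ((deriv f x : ℝ) : ℂ) :=
  funext fun x => (hf x).hasDerivAt.ofReal_comp.deriv

theorem deriv_deriv_ofReal_comp {f : ℝ → ℝ} (hf : Differentiable ℝ f)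
    (hf' : Differentiable ℝ (deriv f)) :
    deriv (deriv fun x => (f x : ℂ)) = fun x => ((deriv (deriv f) x : ℝ) : ℂ) := by
  rw [deriv_ofReal_comp hf, deriv_ofReal_comp hf']

theorem integrable_one_add_sq_sq_mul_exp_neg_sq :
    Integrable fun x : ℝ => (1 + x ^ 2) ^ 2 * exp (-(1 / 2) * x ^ 2) := by
  have h (n : ℕ) : Integrable fun x : ℝ => x ^ n * exp (-(1 / 2) * x ^ 2) := by
    have hn : (-1 : ℝ) < n := by linarith [n.cast_nonneg (α := ℝ)]
    simpa [rpow_natCast] using integrable_rpow_mul_exp_neg_mul_sq (b := 1 / 2) (by norm_num) hn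
  refine ((h 0).add (((h 2).const_mul 2).add (h 4))).congr (ae_of_all _ fun x => ?_)
  simp only [Pi.add_apply]
  ring

theorem memL2_mul_gaussBump {P : ℝ → ℝ} (hP : Continuous P) {K : ℝ}
    (hK : ∀ x, |P x| ≤ K * (1 + x ^ 2)) (c b : ℝ) :
    MemL2 fun x => ((P x * gaussBump c b x : ℝ) : ℂ) := by
  have hcont : Continuous fun x => ((P x * gaussBump c b x : ℝ) : ℂ) := by
    unfold gaussBump; fun_prop
  refine MemLp.restrict _ ?_
  rw [memLp_two_iff_integrable_sq_norm hcont.aestronglyMeasurable]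
  refine (integrable_one_add_sq_sq_mul_exp_neg_sq.const_mul (K ^ 2 * exp (2 * c + b ^ 2))).mono'
    (hcont.norm.pow 2).aestronglyMeasurable (ae_of_all _ fun x => ?_)
  have hP2 : P x ^ 2 ≤ (K * (1 + x ^ 2)) ^ 2 := by
    rw [← sq_abs]; exact pow_le_pow_left₀ (abs_nonneg _) (hK x) 2
  -- `(x + b)² ≥ x²/2 - b²`, since the difference is `(x + 2b)²/2`
  have hgauss : gaussBump c b x ^ 2 ≤ exp (2 * c + b ^ 2) * exp (-(1 / 2) * x ^ 2) := by
    rw [gaussBump, ← exp_nat_mul, ← exp_add, exp_le_exp]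
    push_cast
    nlinarith [sq_nonneg (x + 2 * b)]
  rw [norm_pow, norm_norm, Complex.norm_real, Real.norm_eq_abs, sq_abs, mul_pow]
  calc P x ^ 2 * gaussBump c b x ^ 2
      ≤ (K * (1 + x ^ 2)) ^ 2 * (exp (2 * c + b ^ 2) * exp (-(1 / 2) * x ^ 2)) :=
        mul_le_mul hP2 hgauss (by positivity) (by positivity)
    _ = _ := by ring

theorem memW2_gaussBump (c b : ℝ) : MemW2 fun x => ((gaussBump c b x : ℝ) : ℂ) := by
  have hd := deriv_ofReal_comp (differentiable_gaussBump c b)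
  refine ⟨⟨⟨?_, fun x _ => ?_, ?_, ?_⟩, ?_, fun x _ => ?_, ?_⟩, ?_⟩
  · exact (Complex.continuous_ofReal.comp (differentiable_gaussBump c b).continuous).continuousOn
  · exact (differentiable_gaussBump c b x).hasDerivAt.ofReal_comp.differentiableAt
  · simpa using memL2_mul_gaussBump (P := fun _ => 1) continuous_const (K := 1)
      (fun x => by rw [abs_one, one_mul]; nlinarith [sq_nonneg x]) c b
  · rw [hd, deriv_gaussBump]
    refine memL2_mul_gaussBump (by fun_prop) (K := 1 + |b|) (fun x => ?_) c b
    rw [abs_neg]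
    nlinarith [abs_add_le x b, abs_nonneg b, sq_abs x, abs_nonneg x,
      mul_nonneg (abs_nonneg b) (sq_nonneg x)]
  · rw [hd]
    exact (Complex.continuous_ofReal.comp
      (differentiable_deriv_gaussBump c b).continuous).continuousOn
  · rw [hd]
    exact (differentiable_deriv_gaussBump c b x).hasDerivAt.ofReal_comp.differentiableAt
  · rw [deriv_deriv_ofReal_comp (differentiable_gaussBump c b)
      (differentiable_deriv_gaussBump c b), deriv_deriv_gaussBump]
    refine memL2_mul_gaussBump (by fun_prop) (K := 2 + 2 * b ^ 2) (fun x => ?_) c b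
    exact abs_le.mpr ⟨by nlinarith [sq_nonneg (x + b), sq_nonneg x, sq_nonneg (b * x)],
      by nlinarith [sq_nonneg (x - b), sq_nonneg (b * x)]⟩
  · convert memL2_mul_gaussBump (P := fun x => x ^ 2) (by fun_prop) (K := 1) (fun x => ?_) c b
      using 2 with x
    · push_cast; ring
    · rw [abs_of_nonneg (sq_nonneg x)]; linarith

/-- On edge `j` of `Φ_k^α` the Gaussian is centred at `-edgeShift N k α j = ±a_k`. -/
def edgeShift (N k : ℕ) (α : ℝ) (j : Fin N) : ℝ :=
  if (j : ℕ) < k then -(α / (2 * k - N)) else α / (2 * k - N)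

theorem edgeShift_sq (N k : ℕ) (α : ℝ) (j : Fin N) :
    edgeShift N k α j ^ 2 = (α / (2 * k - N)) ^ 2 := by
  unfold edgeShift; split_ifs <;> ring

theorem sum_edgeShift {N k : ℕ} (h : 2 * k < N) (α : ℝ) : ∑ j, edgeShift N k α j = -α := by
  have hk : k ≤ N := by omega
  have hden : (2 * k - N : ℝ) ≠ 0 := by
    rw [sub_ne_zero]; exact_mod_cast h.ne
  have hcard : #{j : Fin N | (j : ℕ) < k} = k := by
    rw [Fin.card_filter_val_lt, min_eq_right hk]
  have hcard' : #{j : Fin N | ¬(j : ℕ) < k} = N - k := by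
    rw [Finset.filter_not, Finset.card_sdiff_of_subset (Finset.filter_subset _ _), hcard,
      Finset.card_univ, Fintype.card_fin]
  simp only [edgeShift]
  rw [Finset.sum_ite, Finset.sum_const, Finset.sum_const, hcard, hcard', nsmul_eq_mul,
    nsmul_eq_mul, Nat.cast_sub hk]
  linear_combination -mul_div_cancel₀ α hden

theorem phiProf_eq_gaussBump (N k : ℕ) (α ω : ℝ) (j : Fin N) :
    phiProf N k α ω j = gaussBump ((ω + 1) / 2) (edgeShift N k α j) := by
  funext x
  unfold phiProf gaussBump edgeShift
  split_ifs <;> rw [← exp_add] <;> ring_nf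

theorem phiProf_zero (N k : ℕ) (α ω : ℝ) (j : Fin N) :
    phiProf N k α ω j 0 = exp ((ω + 1) / 2 - (α / (2 * k - N)) ^ 2 / 2) := by
  rw [phiProf_eq_gaussBump, gaussBump_zero, edgeShift_sq]

theorem sum_deriv_phiProf_zero {N k : ℕ} (h : 2 * k < N) (α ω : ℝ) (j₀ : Fin N) :
    ∑ j, deriv (phiProf N k α ω j) 0 = α * phiProf N k α ω j₀ 0 := by
  simp_rw [phiProf_eq_gaussBump, deriv_gaussBump, zero_add, ← phiProf_eq_gaussBump, phiProf_zero]
  rw [← Finset.sum_mul, Finset.sum_neg_distrib, sum_edgeShift h, neg_neg]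

section Profile

variable (N k : ℕ) (α ω : ℝ) (j : Fin N)

theorem phiProf_solves_stationary_eq (x : ℝ) :
    -deriv (deriv (phiProf N k α ω j)) x + ω * phiProf N k α ω j x
      - phiProf N k α ω j x * log (phiProf N k α ω j x ^ 2) = 0 := by
  rw [phiProf_eq_gaussBump]
  exact gaussBump_solves_stationary_eq _ ω x

theorem differentiable_phiProf : Differentiable ℝ (phiProf N k α ω j) := by
  rw [phiProf_eq_gaussBump]
  exact differentiable_gaussBump _ _

theorem differentiable_deriv_phiProf : Differentiable ℝ (deriv (phiProf N k α ω j)) := by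
  rw [phiProf_eq_gaussBump]
  exact differentiable_deriv_gaussBump _ _

theorem memW2_ofReal_phiProf : MemW2 fun x => ((phiProf N k α ω j x : ℝ) : ℂ) := by
  simpa only [phiProf_eq_gaussBump] using memW2_gaussBump _ _

end Profile

theorem phi_is_standing_wave_profile_general
    (N k : ℕ) (α : ℝ) (ω : ℝ)
    (hk1 : 1 ≤ k) (hk2 : k ≤ (N - 1) / 2) :
    (∀ j : Fin N, ∀ x ∈ Set.Ioi (0:ℝ),
      -(deriv (deriv (phiProf N k α ω j)) x) + ω * phiProf N k α ω j x
        - phiProf N k α ω j x * Real.log ((phiProf N k α ω j x)^2) = 0) ∧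
    (∀ j j' : Fin N, phiProf N k α ω j 0 = phiProf N k α ω j' 0) ∧
    (∀ j₀ : Fin N, (∑ j, deriv (phiProf N k α ω j) 0) = α * phiProf N k α ω j₀ 0) ∧
    domDelta N α (fun j x => ((phiProf N k α ω j x : ℝ) : ℂ)) ∧
    (∀ j : Fin N, ∀ x ∈ Set.Ioi (0:ℝ),
      -(deriv (deriv (fun y => ((phiProf N k α ω j y : ℝ) : ℂ))) x)
        + (ω : ℂ) * ((phiProf N k α ω j x : ℝ) : ℂ)
        - ((phiProf N k α ω j x : ℝ) : ℂ) * ((Real.log ((phiProf N k α ω j x)^2) : ℝ) : ℂ)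
        = 0) := by
  have continuity (j j' : Fin N) : phiProf N k α ω j 0 = phiProf N k α ω j' 0 := by
    rw [phiProf_zero, phiProf_zero]
  have kirchhoff := sum_deriv_phiProf_zero (by omega : 2 * k < N) α ω
  have hderiv (j : Fin N) := deriv_ofReal_comp (differentiable_phiProf N k α ω j)
  refine ⟨fun j x _ => phiProf_solves_stationary_eq N k α ω j x,
    continuity, kirchhoff,
    ⟨memW2_ofReal_phiProf N k α ω, fun j j' => congrArg _ (continuity j j'), fun j₀ => ?_⟩,
    fun j x _ => ?_⟩
  · simp only [hderiv]
    exact_mod_cast kirchhoff j₀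
  · simp only [deriv_deriv_ofReal_comp (differentiable_phiProf N k α ω j)
      (differentiable_deriv_phiProf N k α ω j)]
    exact_mod_cast phiProf_solves_stationary_eq N k α ω j x

/-- the profiles `Φ_k^α` solve the stationary logarithmic equation on each edge,
satisfy the δ-vertex conditions, belong to `dom(H^α_δ)`, and satisfy
`H^α_δ Φ + ω Φ − Φ log |Φ|² = 0`. -/
theorem phi_is_standing_wave_profile
    (N k : ℕ) (hN : 3 ≤ N) (α : ℝ) (hα : α ≠ 0) (ω : ℝ)
    (hk1 : 1 ≤ k) (hk2 : k ≤ (N - 1) / 2) :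
    (∀ j : Fin N, ∀ x ∈ Set.Ioi (0:ℝ),
      -(deriv (deriv (phiProf N k α ω j)) x) + ω * phiProf N k α ω j x
        - phiProf N k α ω j x * Real.log ((phiProf N k α ω j x)^2) = 0) ∧
    (∀ j j' : Fin N, phiProf N k α ω j 0 = phiProf N k α ω j' 0) ∧
    (∀ j₀ : Fin N, (∑ j, deriv (phiProf N k α ω j) 0) = α * phiProf N k α ω j₀ 0) ∧
    domDelta N α (fun j x => ((phiProf N k α ω j x : ℝ) : ℂ)) ∧
    (∀ j : Fin N, ∀ x ∈ Set.Ioi (0:ℝ),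
      -(deriv (deriv (fun y => ((phiProf N k α ω j y : ℝ) : ℂ))) x)
        + (ω : ℂ) * ((phiProf N k α ω j x : ℝ) : ℂ)
        - ((phiProf N k α ω j x : ℝ) : ℂ) * ((Real.log ((phiProf N k α ω j x)^2) : ℝ) : ℂ)
        = 0) :=
  phi_is_standing_wave_profile_general N k α ω hk1 hk2
end
end
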